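/- arXiv:1706.01005 — 5 statements merged into one kernel-verified Lean document; each statement's English description precedes it below -/
import Mathlib

section
/- Let $w_x(L),w_x(R)\in\mathbb{C}$ with $|w_x(L)|^2+|w_x(R)|^2=1$, $w_x(L)w_x(R)\neq0$ for $1\le x\le n$, and $w_0(R)=w_{n+1}(L)=1$, $w_0(L)=w_{n+1}(R)=0$ (boundary conventions). Define the Hermitian tridiagonal matrix $J^{QW}$ by $(J^{QW})_{x,x+1}=\overline{w_x(R)}\,w_{x+1}(L)$, $(J^{QW})_{x+1,x}=w_x(R)\,\overline{w_{x+1}(L)}$, zero elsewhere. Set $p_x=|w_x(R)|^2$, $q_x=|w_x(L)|^2$ and let $P$ be the birth and death chain transition matrix with these probabilities. Let $\pi^{1/2}(0)=1$, $\pi^{1/2}(x)=\prod_{y=0}^{x-1}w_y(R)/\prod_{y=1}^{x}w_y(L)$ and $D_{\pi^{1/2}}=\mathrm{diag}(\pi^{1/2}(0),\dots,\pi^{1/2}(n+1))$. Then $J^{QW}=D_{\pi^{1/2}}PD_{\pi^{1/2}}^{-1}$. -/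
theorem stmt_2 (n : ℕ) (wL wR : ℕ → ℂ)
    (hnorm : ∀ x ≤ n + 1, ‖wL x‖ ^ 2 + ‖wR x‖ ^ 2 = 1)
    (hne : ∀ x, 1 ≤ x → x ≤ n → wL x * wR x ≠ 0)
    (hwR0 : wR 0 = 1) (hwL0 : wL 0 = 0)
    (hwLn : wL (n + 1) = 1) (hwRn : wR (n + 1) = 0)
    (JQW P : Matrix (Fin (n + 2)) (Fin (n + 2)) ℂ)
    (hJ : ∀ x y : Fin (n + 2), JQW x y =
      if (y : ℕ) = (x : ℕ) + 1 then (starRingEnd ℂ) (wR x) * wL y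
      else if (x : ℕ) = (y : ℕ) + 1 then wR y * (starRingEnd ℂ) (wL x) else 0)
    (hP : ∀ x y : Fin (n + 2), P x y =
      if (y : ℕ) = (x : ℕ) + 1 then ((‖wR (x : ℕ)‖ ^ 2 : ℝ) : ℂ)
      else if (x : ℕ) = (y : ℕ) + 1 then ((‖wL (x : ℕ)‖ ^ 2 : ℝ) : ℂ) else 0)
    (πh : ℕ → ℂ)
    (hπh : ∀ x, πh x = (∏ y ∈ Finset.range x, wR y) / (∏ y ∈ Finset.Icc 1 x, wL y)) :
    JQW = Matrix.diagonal (fun x : Fin (n + 2) => πh x) * P *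
          Matrix.diagonal (fun x : Fin (n + 2) => (πh x)⁻¹) := by
  have hwRne : ∀ x : ℕ, x ≤ n → wR x ≠ 0 := by
    intro x hx
    rcases Nat.eq_zero_or_pos x with h | h
    · subst h; rw [hwR0]; exact one_ne_zero
    · intro h0
      exact hne x h hx (by rw [h0, mul_zero])
  have hwLne : ∀ x : ℕ, 1 ≤ x → x ≤ n + 1 → wL x ≠ 0 := by
    intro x h1 h2
    rcases eq_or_lt_of_le h2 with h | h
    · rw [h, hwLn]; exact one_ne_zero
    · intro h0
      exact hne x h1 (by omega) (by rw [h0, zero_mul])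
  have hπne : ∀ x : ℕ, x ≤ n + 1 → πh x ≠ 0 := by
    intro x hx
    rw [hπh]
    apply div_ne_zero
    · exact Finset.prod_ne_zero_iff.mpr fun y hy =>
        hwRne y (by simp only [Finset.mem_range] at hy; omega)
    · refine Finset.prod_ne_zero_iff.mpr fun y hy => ?_
      simp only [Finset.mem_Icc] at hy
      exact hwLne y hy.1 (by omega)
  have hrec : ∀ x : ℕ, πh (x + 1) = πh x * wR x / wL (x + 1) := by
    intro x
    rw [hπh, hπh, Finset.prod_range_succ,
      Finset.prod_Icc_succ_top (Nat.succ_le_succ (Nat.zero_le x)),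
      div_mul_eq_mul_div, div_div]
  have hcast : ∀ z : ℂ, ((‖z‖ ^ 2 : ℝ) : ℂ) = (starRingEnd ℂ) z * z := by
    intro z; rw [Complex.conj_mul']; norm_cast
  ext x y
  rw [Matrix.mul_diagonal, Matrix.diagonal_mul, hJ, hP]
  split_ifs with h1 h2
  · have hx : (x : ℕ) ≤ n := by have := y.isLt; omega
    rw [h1, hrec x, hcast]
    have h1' : πh x ≠ 0 := hπne x (by omega)
    have h2' : wR x ≠ 0 := hwRne x hx
    have h3' : wL ((x : ℕ) + 1) ≠ 0 := hwLne _ (Nat.le_add_left 1 x) (by omega)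
    field_simp
  · have hy : (y : ℕ) ≤ n := by have := x.isLt; omega
    rw [h2, hrec y, hcast]
    have h1' : πh y ≠ 0 := hπne y (by omega)
    have h2' : wR y ≠ 0 := hwRne y hy
    have h3' : wL ((y : ℕ) + 1) ≠ 0 := hwLne _ (Nat.le_add_left 1 y) (by omega)
    field_simp
  · rw [mul_zero, zero_mul]
end

section
/- Let $U$ be a unitary operator on a finite-dimensional Hilbert space and suppose unit vectors $a,b$ satisfy $Ua=\nu_1 b$ and $Ub=\nu_2 a+(\nu_1-\nu_2)\lambda b$ with $|\nu_1|=|\nu_2|=1$, $\lambda\in\mathbb{R}$, $\lambda\neq\pm1$, and $\langle a,b\rangle=\lambda$. Then the restriction of $U$ to $\mathrm{Span}(a,b)$ has eigenvalues $\mu_{\pm}$ which are exactly the two roots of $\mu^2-(\nu_1-\nu_2)\lambda\mu-\nu_1\nu_2=0$, with eigenvectors $\nu_2 a+\mu_\pm b$. -/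
/-!
In the basis `a, b` the map `U` acts on `span {a, b}` by the companion matrix of
`μ ^ 2 - (ν₁ - ν₂) λ μ - ν₁ ν₂`, so its eigenvalues there are the roots of this polynomial and
`ν₂ a + μ b` is an eigenvector for a root `μ`. That `a, b` really is a basis is the strict
Cauchy–Schwarz inequality `|⟪a, b⟫| = |λ| < 1`.
-/

open scoped InnerProductSpace

theorem linearIndependent_pair_of_norm_inner_lt {𝕜 E : Type*} [RCLike 𝕜] [NormedAddCommGroup E]
    [InnerProductSpace 𝕜 E] {x y : E} (h : ‖⟪x, y⟫_𝕜‖ < ‖x‖ * ‖y‖) :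
    LinearIndependent 𝕜 ![x, y] := by
  have hx : x ≠ 0 := by rintro rfl; simp at h
  refine (LinearIndependent.pair_iff' hx).2 fun r hr => h.ne ?_
  have hcs : ‖⟪x, y⟫_𝕜‖ = ‖x‖ * ‖y‖ ↔ x = 0 ∨ ∃ r : 𝕜, y = r • x :=
    (norm_inner_eq_norm_tfae 𝕜 x y).out 0 2
  exact hcs.2 (Or.inr ⟨r, hr.symm⟩)

section CompanionPair

variable {K V : Type*} [Field K] [AddCommGroup V] [Module K V] {U : V →ₗ[K] V} {a b : V}
  {ν₁ ν₂ c μ : K}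

theorem LinearMap.apply_companion_eigenvector (hUa : U a = ν₁ • b) (hUb : U b = ν₂ • a + c • b)
    (hμ : μ ^ 2 - c * μ - ν₁ * ν₂ = 0) :
    U (ν₂ • a + μ • b) = μ • (ν₂ • a + μ • b) := by
  rw [map_add, map_smul, map_smul, hUa, hUb]
  match_scalars
  · linear_combination -hμ
  · ring

theorem LinearMap.companion_root_of_eigenvector_mem_span (hab : LinearIndependent K ![a, b])
    (hUa : U a = ν₁ • b) (hUb : U b = ν₂ • a + c • b) {v : V}
    (hv : v ∈ Submodule.span K {a, b}) (hv0 : v ≠ 0) (hUv : U v = μ • v) :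
    μ ^ 2 - c * μ - ν₁ * ν₂ = 0 := by
  obtain ⟨s, t, rfl⟩ := Submodule.mem_span_pair.mp hv
  have hcoeff : (t * ν₂ - μ * s) • a + (s * ν₁ + t * c - μ * t) • b = 0 := by
    have hexp : (t * ν₂ - μ * s) • a + (s * ν₁ + t * c - μ * t) • b
        = U (s • a + t • b) - μ • (s • a + t • b) := by
      rw [map_add, map_smul, map_smul, hUa, hUb]
      module
    rw [hexp, hUv, sub_self]
  obtain ⟨h₁, h₂⟩ := LinearIndependent.pair_iff.mp hab _ _ hcoeff
  have hs : (μ ^ 2 - c * μ - ν₁ * ν₂) * s = 0 := by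
    linear_combination (c - μ) * h₁ - ν₂ * h₂
  have ht : (μ ^ 2 - c * μ - ν₁ * ν₂) * t = 0 := by
    linear_combination (-ν₁) * h₁ - μ * h₂
  by_contra hq
  apply hv0
  rw [(mul_eq_zero.mp hs).resolve_left hq, (mul_eq_zero.mp ht).resolve_left hq, zero_smul,
    zero_smul, add_zero]

end CompanionPair

theorem stmt_9_general {E : Type*} [NormedAddCommGroup E] [InnerProductSpace ℂ E]
    (U : E →ₗ[ℂ] E)
    (a b : E) (ha : ‖a‖ = 1) (hb : ‖b‖ = 1)
    (ν₁ ν₂ : ℂ) (hν₂ : ‖ν₂‖ = 1)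
    (lam : ℝ) (hlam : lam ≠ 1) (hlam' : lam ≠ -1)
    (hab : (inner ℂ a b : ℂ) = (lam : ℂ))
    (hUa : U a = ν₁ • b)
    (hUb : U b = ν₂ • a + ((ν₁ - ν₂) * (lam : ℂ)) • b) :
    (∀ μ : ℂ, μ ^ 2 - (ν₁ - ν₂) * (lam : ℂ) * μ - ν₁ * ν₂ = 0 →
      ν₂ • a + μ • b ≠ 0 ∧ U (ν₂ • a + μ • b) = μ • (ν₂ • a + μ • b)) ∧
    (∀ (μ : ℂ) (v : E), v ∈ Submodule.span ℂ ({a, b} : Set E) → v ≠ 0 →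
      U v = μ • v → μ ^ 2 - (ν₁ - ν₂) * (lam : ℂ) * μ - ν₁ * ν₂ = 0) := by
  have hnorm : ‖(inner ℂ a b : ℂ)‖ = |lam| := by rw [hab, Complex.norm_real, Real.norm_eq_abs]
  have hlt : ‖(inner ℂ a b : ℂ)‖ < ‖a‖ * ‖b‖ := by
    have hle : |lam| ≤ 1 := by simpa [hnorm, ha, hb] using norm_inner_le_norm (𝕜 := ℂ) a b
    have hne : |lam| ≠ 1 := by rw [Ne, abs_eq zero_le_one]; tauto
    rw [hnorm, ha, hb, one_mul]
    exact lt_of_le_of_ne hle hne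
  have hind := linearIndependent_pair_of_norm_inner_lt hlt
  have hν₂0 : ν₂ ≠ 0 := by rintro rfl; simp at hν₂
  refine ⟨fun μ hμ => ⟨fun h => hν₂0 (LinearIndependent.pair_iff.mp hind _ _ h).1,
    U.apply_companion_eigenvector hUa hUb hμ⟩,
    fun μ v hv hv0 hUv => U.companion_root_of_eigenvector_mem_span hind hUa hUb hv hv0 hUv⟩

theorem stmt_9 {E : Type*} [NormedAddCommGroup E] [InnerProductSpace ℂ E]
    [FiniteDimensional ℂ E]
    (U : E →ₗ[ℂ] E) (hUiso : ∀ v w : E, (inner ℂ (U v) (U w) : ℂ) = inner ℂ v w)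
    (a b : E) (ha : ‖a‖ = 1) (hb : ‖b‖ = 1)
    (ν₁ ν₂ : ℂ) (hν₁ : ‖ν₁‖ = 1) (hν₂ : ‖ν₂‖ = 1)
    (lam : ℝ) (hlam : lam ≠ 1) (hlam' : lam ≠ -1)
    (hab : (inner ℂ a b : ℂ) = (lam : ℂ))
    (hUa : U a = ν₁ • b)
    (hUb : U b = ν₂ • a + ((ν₁ - ν₂) * (lam : ℂ)) • b) :
    (∀ μ : ℂ, μ ^ 2 - (ν₁ - ν₂) * (lam : ℂ) * μ - ν₁ * ν₂ = 0 →
      ν₂ • a + μ • b ≠ 0 ∧ U (ν₂ • a + μ • b) = μ • (ν₂ • a + μ • b)) ∧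
    (∀ (μ : ℂ) (v : E), v ∈ Submodule.span ℂ ({a, b} : Set E) → v ≠ 0 →
      U v = μ • v → μ ^ 2 - (ν₁ - ν₂) * (lam : ℂ) * μ - ν₁ * ν₂ = 0) :=
  stmt_9_general U a b ha hb ν₁ ν₂ hν₂ lam hlam hlam' hab hUa hUb
end

section
/- Let $\mu$ be a root of $\mu^2-(\nu_1-\nu_2)\lambda\mu-\nu_1\nu_2=0$ where $|\nu_1|=|\nu_2|=1$ and $\lambda\in[-1,1]$. Then $|\mu|=1$ and $\mu=(-\nu_1\nu_2)^{1/2}e^{\pm i\theta}$ for some $\theta$ with $\cos\theta=-\Im(\nu_1^{1/2}\overline{\nu_2}^{1/2})\lambda$ (for appropriate choices of square roots). -/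
/-! With `r` a square root of `ν₁ ν̄₂`, the number `s = -i ν₂ r` is a square root of `-ν₁ ν₂`
satisfying `ν₁ - ν₂ = -2 (Im r) s`. The equation then reads `μ² - 2 cos θ · s μ + s² = 0` with
`cos θ = -(Im r) λ ∈ [-1, 1]`, whose roots are `s e^{± i θ}`, both of modulus one. -/

open Complex ComplexConjugate

lemma Complex.eq_mul_exp_or_of_sq_sub_two_cos_mul_add_sq {μ s z : ℂ}
    (h : μ ^ 2 - 2 * cos z * s * μ + s ^ 2 = 0) :
    μ = s * exp (z * I) ∨ μ = s * exp (-z * I) := by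
  have hprod : exp (z * I) * exp (-z * I) = 1 := by rw [← exp_add]; simp
  have hfactor : (μ - s * exp (z * I)) * (μ - s * exp (-z * I)) = 0 := by
    rw [← h, cos]
    linear_combination s ^ 2 * hprod
  rcases mul_eq_zero.mp hfactor with h₁ | h₂
  · exact .inl (sub_eq_zero.mp h₁)
  · exact .inr (sub_eq_zero.mp h₂)

lemma Complex.mul_conj_eq_one {z : ℂ} (hz : ‖z‖ = 1) : z * conj z = 1 := by
  rw [mul_conj, normSq_eq_norm_sq, hz]; norm_num

section UnitSquareRoot

variable {ν₁ ν₂ r : ℂ}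

lemma norm_eq_one_of_sq_eq_mul_conj (hν₁ : ‖ν₁‖ = 1) (hν₂ : ‖ν₂‖ = 1)
    (hr : r ^ 2 = ν₁ * conj ν₂) : ‖r‖ = 1 := by
  have hsq : ‖r‖ ^ 2 = 1 := by rw [← norm_pow, hr, norm_mul, hν₁, RCLike.norm_conj, hν₂, one_mul]
  exact (pow_eq_one_iff_of_nonneg (norm_nonneg r) two_ne_zero).mp hsq

lemma sq_neg_I_mul_mul_eq (hν₂ : ‖ν₂‖ = 1) (hr : r ^ 2 = ν₁ * conj ν₂) :
    (-I * ν₂ * r) ^ 2 = -(ν₁ * ν₂) := by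
  linear_combination (ν₂ ^ 2 * r ^ 2) * I_sq - ν₂ ^ 2 * hr - ν₁ * ν₂ * mul_conj_eq_one hν₂

lemma sub_eq_neg_two_im_mul (hν₂ : ‖ν₂‖ = 1) (hr : r ^ 2 = ν₁ * conj ν₂) (hr₁ : ‖r‖ = 1) :
    ν₁ - ν₂ = -2 * (r.im : ℂ) * (-I * ν₂ * r) := by
  have hsub : r - conj r = 2 * r.im * I := by rw [sub_conj]; push_cast; ring
  linear_combination (ν₂ * r) * hsub - ν₂ * hr + ν₂ * mul_conj_eq_one hr₁
    - ν₁ * mul_conj_eq_one hν₂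

end UnitSquareRoot

theorem stmt_10 (ν₁ ν₂ μ : ℂ) (hν₁ : ‖ν₁‖ = 1) (hν₂ : ‖ν₂‖ = 1)
    (lam : ℝ) (hlam : -1 ≤ lam ∧ lam ≤ 1)
    (hroot : μ ^ 2 - (ν₁ - ν₂) * (lam : ℂ) * μ - ν₁ * ν₂ = 0) :
    ‖μ‖ = 1 ∧
    ∃ (s r : ℂ) (θ : ℝ), s ^ 2 = -(ν₁ * ν₂) ∧ r ^ 2 = ν₁ * (starRingEnd ℂ ν₂) ∧
      Real.cos θ = -(r.im) * lam ∧
      (μ = s * Complex.exp (θ * Complex.I) ∨ μ = s * Complex.exp (-θ * Complex.I)) := by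
  obtain ⟨r, hr⟩ := IsAlgClosed.exists_pow_nat_eq (ν₁ * conj ν₂) two_pos
  have hr₁ := norm_eq_one_of_sq_eq_mul_conj hν₁ hν₂ hr
  set s := -I * ν₂ * r
  have hs : ‖s‖ = 1 := by simp [s, hν₂, hr₁]
  have hbound : |-r.im * lam| ≤ 1 := by
    rw [abs_mul, abs_neg]
    exact mul_le_one₀ (hr₁ ▸ abs_im_le_norm r) (abs_nonneg _) (abs_le.mpr hlam)
  set θ := Real.arccos (-r.im * lam)
  have hcos : Real.cos θ = -r.im * lam := Real.cos_arccos (abs_le.mp hbound).1 (abs_le.mp hbound).2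
  have hquad : μ ^ 2 - 2 * cos θ * s * μ + s ^ 2 = 0 := by
    rw [← ofReal_cos, hcos, sq_neg_I_mul_mul_eq hν₂ hr]
    push_cast
    linear_combination hroot + lam * μ * sub_eq_neg_two_im_mul hν₂ hr hr₁
  have hμ := eq_mul_exp_or_of_sq_sub_two_cos_mul_add_sq hquad
  refine ⟨?_, s, r, θ, sq_neg_I_mul_mul_eq hν₂ hr, hr, hcos, hμ⟩
  rcases hμ with h | h
  · rw [h, norm_mul, hs, norm_exp_ofReal_mul_I, one_mul]
  · rw [h, norm_mul, hs, ← ofReal_neg, norm_exp_ofReal_mul_I, one_mul]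
end

section
/- For the Ehrenfest chain on $\{0,\dots,N\}$ with $p_x=(N-x)/N$, $q_x=x/N$, the vector $\phi_m$ with $\phi_m(x)=\sum_{j=0}^{m}(-1)^j\binom{N-x}{m-j}\binom{x}{j}$ satisfies $q_x\phi_m(x-1)+p_x\phi_m(x+1)=\lambda_m\phi_m(x)$ for all $x$, where $\lambda_m=1-2m/N$ (with conventions $q_0=p_N=0$). -/
open Polynomial Finset

/-- Krawtchouk polynomial `φ_m^{(N)}(x)` (real-valued). -/
def krawtchoukR (N m x : ℕ) : ℝ :=
  ∑ j ∈ Finset.range (m + 1),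
    (-1 : ℝ) ^ j * ((N - x).choose (m - j)) * (x.choose j)

lemma coeff_one_sub_X_pow (a j : ℕ) :
    (((1 : ℝ[X]) - X) ^ a).coeff j = (-1 : ℝ) ^ j * a.choose j := by
  rw [show ((1 : ℝ[X]) - X) = -X + 1 by ring, add_pow]
  rw [finset_sum_coeff]
  have h : ∀ k ∈ Finset.range (a + 1),
      ((-X : ℝ[X]) ^ k * 1 ^ (a - k) * (a.choose k : ℝ[X])).coeff j
        = if k = j then (-1 : ℝ) ^ j * a.choose j else 0 := by
    intro k _
    rw [show ((-X : ℝ[X]) ^ k * 1 ^ (a - k) * (a.choose k : ℝ[X]))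
        = Polynomial.C ((-1 : ℝ) ^ k * a.choose k) * X ^ k by
      rw [map_mul, map_pow, map_neg, map_one, ← Polynomial.C_eq_natCast]; ring]
    rw [coeff_C_mul, coeff_X_pow]
    by_cases hk : j = k
    · simp [hk]
    · rw [if_neg (fun h : k = j => hk h.symm)]; simp [hk]
  rw [Finset.sum_congr rfl h, Finset.sum_ite_eq' (Finset.range (a + 1)) j]
  by_cases hj : j ∈ Finset.range (a + 1)
  · simp [hj]
  · simp only [hj, if_false]
    rw [Nat.choose_eq_zero_of_lt (by simpa using Nat.lt_of_succ_le (Nat.succ_le_of_lt (by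
      simpa [Nat.lt_succ_iff, not_le] using hj)))]
    simp

lemma kr_eq_coeff (N m x : ℕ) :
    krawtchoukR N m x = (((1 : ℝ[X]) - X) ^ x * (1 + X) ^ (N - x)).coeff m := by
  rw [krawtchoukR, coeff_mul, Finset.Nat.sum_antidiagonal_eq_sum_range_succ_mk]
  refine Finset.sum_congr rfl (fun j hj => ?_)
  rw [coeff_one_sub_X_pow, coeff_one_add_X_pow]
  ring

lemma coeff_X_mul_derivative (p : ℝ[X]) (m : ℕ) :
    (X * derivative p).coeff m = m * p.coeff m := by
  cases m with
  | zero => simp [coeff_zero_eq_eval_zero]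
  | succ n => rw [coeff_X_mul, coeff_derivative]; push_cast; ring

lemma deriv_F (a c : ℕ) :
    derivative (((1 : ℝ[X]) - X) ^ (a + 1) * (1 + X) ^ (c + 1))
      = - (Polynomial.C ((a : ℝ) + 1)) * ((1 - X) ^ a * (1 + X) ^ (c + 1))
        + (Polynomial.C ((c : ℝ) + 1)) * ((1 - X) ^ (a + 1) * (1 + X) ^ c) := by
  rw [derivative_mul, derivative_pow, derivative_pow]
  simp only [derivative_sub, derivative_add, derivative_one, derivative_X, zero_sub, zero_add]
  push_cast
  ring

lemma abstract_id (u v α γ : ℝ[X]) (a c : ℕ) :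
    α * (u ^ a * v ^ (c + 2)) + γ * (u ^ (a + 2) * v ^ c)
      = (α + γ) * (u ^ (a + 1) * v ^ (c + 1))
        - (v - u) * (-α * (u ^ a * v ^ (c + 1)) + γ * (u ^ (a + 1) * v ^ c)) := by
  ring

lemma polyid_mid (a c : ℕ) :
    Polynomial.C ((a : ℝ) + 1) * (((1 : ℝ[X]) - X) ^ a * (1 + X) ^ (c + 2))
      + Polynomial.C ((c : ℝ) + 1) * ((1 - X) ^ (a + 2) * (1 + X) ^ c)
    = Polynomial.C ((a : ℝ) + (c : ℝ) + 2) * ((1 - X) ^ (a + 1) * (1 + X) ^ (c + 1))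
      - Polynomial.C (2 : ℝ) * (X * derivative (((1 : ℝ[X]) - X) ^ (a + 1) * (1 + X) ^ (c + 1))) := by
  have hC : Polynomial.C ((a : ℝ) + (c : ℝ) + 2)
      = Polynomial.C ((a : ℝ) + 1) + Polynomial.C ((c : ℝ) + 1) := by
    rw [← map_add]; ring_nf
  rw [deriv_F, hC]
  have h := abstract_id ((1 : ℝ[X]) - X) (1 + X) (Polynomial.C ((a : ℝ) + 1))
    (Polynomial.C ((c : ℝ) + 1)) a c
  have hX : ((1 : ℝ[X]) + X) - (1 - X) = Polynomial.C (2 : ℝ) * X := by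
    rw [map_ofNat]; ring
  rw [hX] at h
  linear_combination h

lemma key_mid (N m x : ℕ) (hx1 : 1 ≤ x) (hx2 : x + 1 ≤ N) :
    (x : ℝ) * krawtchoukR N m (x - 1) + ((N : ℝ) - x) * krawtchoukR N m (x + 1)
      = ((N : ℝ) - 2 * m) * krawtchoukR N m x := by
  obtain ⟨a, rfl⟩ : ∃ a, x = a + 1 := ⟨x - 1, (Nat.succ_pred_eq_of_pos hx1).symm⟩
  obtain ⟨c, rfl⟩ : ∃ c, N = a + c + 2 := ⟨N - (a + 2), by omega⟩
  rw [kr_eq_coeff, kr_eq_coeff, kr_eq_coeff]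
  rw [show a + 1 - 1 = a from rfl, show a + c + 2 - a = c + 2 from by omega,
    show a + c + 2 - (a + 1 + 1) = c from by omega,
    show a + c + 2 - (a + 1) = c + 1 from by omega]
  have h := congrArg (fun p : ℝ[X] => p.coeff m) (polyid_mid a c)
  simp only [coeff_add, coeff_sub, coeff_C_mul, coeff_X_mul_derivative] at h
  push_cast
  linear_combination h

lemma key_zero (N m : ℕ) (hN : 1 ≤ N) :
    (N : ℝ) * krawtchoukR N m 1 = ((N : ℝ) - 2 * m) * krawtchoukR N m 0 := by
  obtain ⟨c, rfl⟩ : ∃ c, N = c + 1 := ⟨N - 1, by omega⟩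
  rw [kr_eq_coeff, kr_eq_coeff]
  rw [show c + 1 - 1 = c from rfl, show c + 1 - 0 = c + 1 from rfl]
  have hd : derivative (((1 : ℝ[X]) - X) ^ 0 * (1 + X) ^ (c + 1))
      = Polynomial.C ((c : ℝ) + 1) * ((1 + X) ^ c) := by
    rw [pow_zero, one_mul, derivative_pow]
    simp only [derivative_add, derivative_one, derivative_X, zero_add, mul_one,
      Nat.add_sub_cancel]
    push_cast
    ring
  have hp : Polynomial.C ((c : ℝ) + 1) * (((1 : ℝ[X]) - X) ^ 1 * (1 + X) ^ c)
      = Polynomial.C ((c : ℝ) + 1) * (((1 : ℝ[X]) - X) ^ 0 * (1 + X) ^ (c + 1))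
        - Polynomial.C (2 : ℝ) * (X * derivative (((1 : ℝ[X]) - X) ^ 0 * (1 + X) ^ (c + 1))) := by
    rw [hd, map_ofNat]
    ring
  have h := congrArg (fun p : ℝ[X] => p.coeff m) hp
  simp only [coeff_sub, coeff_C_mul, coeff_X_mul_derivative] at h
  push_cast
  linear_combination h

lemma key_top (N m : ℕ) (hN : 1 ≤ N) :
    (N : ℝ) * krawtchoukR N m (N - 1) = ((N : ℝ) - 2 * m) * krawtchoukR N m N := by
  obtain ⟨a, rfl⟩ : ∃ a, N = a + 1 := ⟨N - 1, by omega⟩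
  rw [kr_eq_coeff, kr_eq_coeff]
  rw [show a + 1 - 1 = a from rfl, show a + 1 - a = 1 from by omega,
    show a + 1 - (a + 1) = 0 from by omega]
  have hd : derivative (((1 : ℝ[X]) - X) ^ (a + 1) * (1 + X) ^ 0)
      = - Polynomial.C ((a : ℝ) + 1) * ((1 - X) ^ a) := by
    rw [pow_zero, mul_one, derivative_pow]
    simp only [derivative_sub, derivative_one, derivative_X, zero_sub,
      Nat.add_sub_cancel]
    push_cast
    ring
  have hp : Polynomial.C ((a : ℝ) + 1) * (((1 : ℝ[X]) - X) ^ a * (1 + X) ^ 1)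
      = Polynomial.C ((a : ℝ) + 1) * (((1 : ℝ[X]) - X) ^ (a + 1) * (1 + X) ^ 0)
        - Polynomial.C (2 : ℝ) * (X * derivative (((1 : ℝ[X]) - X) ^ (a + 1) * (1 + X) ^ 0)) := by
    rw [hd, map_ofNat]
    ring
  have h := congrArg (fun p : ℝ[X] => p.coeff m) hp
  simp only [coeff_sub, coeff_C_mul, coeff_X_mul_derivative] at h
  push_cast
  linear_combination h

theorem stmt_14 (N : ℕ) (hN : 1 ≤ N) (m : ℕ) (hm : m ≤ N) :
    ∀ x ≤ N,
      ((x : ℝ) / N) * krawtchoukR N m (x - 1) +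
        (((N : ℝ) - x) / N) * krawtchoukR N m (x + 1) =
      (1 - 2 * (m : ℝ) / N) * krawtchoukR N m x := by
  intro x hx
  have hN0 : (N : ℝ) ≠ 0 := by positivity
  have key : (x : ℝ) * krawtchoukR N m (x - 1) + ((N : ℝ) - x) * krawtchoukR N m (x + 1)
      = ((N : ℝ) - 2 * m) * krawtchoukR N m x := by
    rcases Nat.eq_zero_or_pos x with h0 | h1
    · subst h0
      have := key_zero N m hN
      push_cast
      linear_combination this
    · rcases eq_or_lt_of_le hx with hNx | hlt
      · subst hNx
        have h1' := key_top x m hN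
        have h2 : ((x : ℝ) - (x : ℝ)) = 0 := by ring
        linear_combination h1'
      · exact key_mid N m x h1 hlt
  field_simp
  linear_combination key
end

section
/- For Krawtchouk polynomials $\phi_m^{(N)}(x)=\sum_{j=0}^{m}(-1)^j\binom{N-x}{m-j}\binom{x}{j}$ one has the sum-of-squares identity $\sum_{m=0}^{N}\left(\phi_m^{(N)}(x)\right)^2=\binom{2N-2x}{N-x}\binom{2x}{x}\Big/\binom{N}{x}$ for $0\le x\le N$. -/
open Polynomial Finset

/-- Krawtchouk polynomial `φ_m^{(N)}(x)`. -/
def krawtchouk (N m x : ℕ) : ℤ :=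
  ∑ j ∈ Finset.range (m + 1),
    (-1 : ℤ) ^ j * ((N - x).choose (m - j)) * (x.choose j)

namespace KrawAux

noncomputable def P (a b : ℕ) : ℤ[X] := (1 + X) ^ a * (1 - X) ^ b

lemma coeff_one_sub_X_pow (b k : ℕ) :
    ((1 - X : ℤ[X]) ^ b).coeff k = (-1) ^ k * (b.choose k : ℤ) := by
  have h : (1 - X : ℤ[X]) = -(X + C (-1 : ℤ)) := by
    rw [map_neg, map_one]; ring
  rw [h, neg_pow, ← C_1, ← C_neg, ← C_pow, coeff_C_mul, coeff_X_add_C_pow]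
  rcases le_or_gt k b with hk | hk
  · obtain ⟨d, rfl⟩ := Nat.exists_eq_add_of_le hk
    have hd : k + d - k = d := by omega
    rw [hd, pow_add]
    have h2 : ((-1 : ℤ)) ^ d * (-1) ^ d = 1 := by
      rw [← pow_add]
      exact Even.neg_one_pow ⟨d, rfl⟩
    linear_combination ((-1 : ℤ) ^ k * ((k + d).choose k : ℤ)) * h2
  · simp [Nat.choose_eq_zero_of_lt hk]

lemma coeff_P (a b m : ℕ) :
    (P a b).coeff m
      = ∑ j ∈ range (m + 1), (-1) ^ j * (b.choose j : ℤ) * (a.choose (m - j)) := by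
  unfold P
  rw [mul_comm, coeff_mul, Finset.Nat.sum_antidiagonal_eq_sum_range_succ_mk]
  refine Finset.sum_congr rfl fun j hj => ?_
  rw [coeff_one_sub_X_pow, coeff_one_add_X_pow]

lemma krawtchouk_eq (N m x : ℕ) : krawtchouk N m x = (P (N - x) x).coeff m := by
  rw [coeff_P, krawtchouk]
  exact Finset.sum_congr rfl fun j _ => by ring

lemma deg_one_add : (1 + X : ℤ[X]).natDegree ≤ 1 := by
  simpa using natDegree_add_le (1 : ℤ[X]) X

lemma deg_one_sub : (1 - X : ℤ[X]).natDegree ≤ 1 := by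
  simpa using natDegree_sub_le (1 : ℤ[X]) X

lemma deg_pow_add (a : ℕ) : ((1 + X : ℤ[X]) ^ a).natDegree ≤ a :=
  natDegree_pow_le.trans (by simpa using Nat.mul_le_mul_left a deg_one_add)

lemma deg_pow_sub (b : ℕ) : ((1 - X : ℤ[X]) ^ b).natDegree ≤ b :=
  natDegree_pow_le.trans (by simpa using Nat.mul_le_mul_left b deg_one_sub)

lemma reflect_one_add : reflect 1 (1 + X : ℤ[X]) = 1 + X := by
  rw [reflect_add, ← C_1, reflect_C, ← pow_one (X : ℤ[X]), reflect_monomial]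
  norm_num [revAt_le]
  ring

lemma reflect_one_sub : reflect 1 (1 - X : ℤ[X]) = -(1 - X) := by
  rw [sub_eq_add_neg, reflect_add, reflect_neg, ← C_1, reflect_C,
    ← pow_one (X : ℤ[X]), reflect_monomial]
  norm_num [revAt_le]

lemma reflect_pow_add (a : ℕ) : reflect a ((1 + X : ℤ[X]) ^ a) = (1 + X) ^ a := by
  induction a with
  | zero =>
      rw [pow_zero, ← C_1, reflect_C]
      simp
  | succ n ih =>
      have h : (1 + X : ℤ[X]) ^ (n + 1) = (1 + X) * (1 + X) ^ n := by ring
      rw [h, show n + 1 = 1 + n from by omega,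
        reflect_mul _ _ deg_one_add (deg_pow_add n), reflect_one_add, ih]
      try ring

lemma reflect_pow_sub (b : ℕ) : reflect b ((1 - X : ℤ[X]) ^ b) = (-1) ^ b * (1 - X) ^ b := by
  induction b with
  | zero =>
      rw [pow_zero, ← C_1, reflect_C]
      simp
  | succ n ih =>
      have h : (1 - X : ℤ[X]) ^ (n + 1) = (1 - X) * (1 - X) ^ n := by ring
      rw [h, show n + 1 = 1 + n from by omega,
        reflect_mul _ _ deg_one_sub (deg_pow_sub n), reflect_one_sub, ih]
      try ring

lemma reflect_P (a b : ℕ) : reflect (a + b) (P a b) = (-1) ^ b * P a b := by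
  unfold P
  rw [reflect_mul _ _ (deg_pow_add a) (deg_pow_sub b), reflect_pow_add, reflect_pow_sub]
  ring

lemma sum_sq (p : ℤ[X]) (n : ℕ) :
    (p * reflect n p).coeff n = ∑ m ∈ range (n + 1), p.coeff m * p.coeff m := by
  rw [coeff_mul, Finset.Nat.sum_antidiagonal_eq_sum_range_succ_mk]
  refine Finset.sum_congr rfl fun m hm => ?_
  have hm' : m ≤ n := by simpa [Nat.lt_succ_iff] using hm
  rw [coeff_reflect, revAt_le (Nat.sub_le n m), Nat.sub_sub_self hm']

lemma P_sq (a b : ℕ) : P a b * P a b = P (2 * a) (2 * b) := by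
  unfold P; ring

lemma palin (A B i : ℕ) (h : i ≤ 2 * A + 2 * B) :
    (P (2 * A) (2 * B)).coeff (2 * A + 2 * B - i) = (P (2 * A) (2 * B)).coeff i := by
  have hr : reflect (2 * A + 2 * B) (P (2 * A) (2 * B)) = P (2 * A) (2 * B) := by
    rw [reflect_P]
    have : ((-1 : ℤ[X])) ^ (2 * B) = 1 := by
      rw [pow_mul]; norm_num
    rw [this, one_mul]
  conv_rhs => rw [← hr]
  rw [coeff_reflect, revAt_le h]

lemma ode_poly (A B : ℕ) :
    X ^ 2 * derivative (P (2 * A) (2 * B))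
        + C ((2 * A + 2 * B : ℕ) : ℤ) * (X ^ 3 * P (2 * A) (2 * B))
        + C ((2 * B : ℕ) : ℤ) * (X ^ 2 * P (2 * A) (2 * B))
      = X ^ 4 * derivative (P (2 * A) (2 * B))
        + C ((2 * A : ℕ) : ℤ) * (X ^ 2 * P (2 * A) (2 * B)) := by
  have h1 : derivative ((1 + X : ℤ[X]) ^ (2 * A)) = (C ((2 * A : ℕ) : ℤ)) * (1 + X) ^ (2 * A - 1) := by
    rw [derivative_pow]
    simp [C_eq_natCast]
  have h2 : derivative ((1 - X : ℤ[X]) ^ (2 * B)) = -((C ((2 * B : ℕ) : ℤ)) * (1 - X) ^ (2 * B - 1)) := by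
    rw [derivative_pow]
    simp [C_eq_natCast]
    try ring
  unfold P
  rw [derivative_mul, h1, h2]
  rcases A with _ | A <;> rcases B with _ | B <;>
    · try rw [show 2 * (A + 1) - 1 = 2 * A + 1 from by omega]
      try rw [show 2 * (B + 1) - 1 = 2 * B + 1 from by omega]
      simp only [C_eq_natCast]
      push_cast
      ring

lemma ode (A B m : ℕ) :
    ((m : ℤ) + 2) * (P (2 * A) (2 * B)).coeff (m + 2)
        + (2 * A + 2 * B) * (P (2 * A) (2 * B)).coeff m
        + 2 * B * (P (2 * A) (2 * B)).coeff (m + 1)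
      = (m : ℤ) * (P (2 * A) (2 * B)).coeff m
        + 2 * A * (P (2 * A) (2 * B)).coeff (m + 1) := by
  set F := P (2 * A) (2 * B) with hF
  have h : (X ^ 2 * derivative F + C ((2 * A + 2 * B : ℕ) : ℤ) * (X ^ 3 * F)
        + C ((2 * B : ℕ) : ℤ) * (X ^ 2 * F)).coeff (m + 3)
      = (X ^ 4 * derivative F + C ((2 * A : ℕ) : ℤ) * (X ^ 2 * F)).coeff (m + 3) := by
    rw [ode_poly]
  simp only [coeff_add, coeff_C_mul, X_pow_mul, coeff_mul_X_pow'] at h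
  rw [show m + 3 - 2 = m + 1 from by omega, show m + 3 - 3 = m from by omega,
    coeff_derivative] at h
  rcases m with _ | k
  · rw [if_neg (show ¬ (4 ≤ 0 + 3) by omega)] at h
    push_cast at h ⊢
    linarith
  · rw [if_pos (show 4 ≤ k + 1 + 3 by omega), show k + 1 + 3 - 4 = k from by omega,
      coeff_derivative] at h
    push_cast at h ⊢
    linarith

lemma step1 (A B m : ℕ) (hm : A + B = m + 1) :
    ((A : ℤ) + B + 1) * (P (2 * A) (2 * B)).coeff (m + 2)
      = ((A : ℤ) - B) * (P (2 * A) (2 * B)).coeff (m + 1) := by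
  have hp : (P (2 * A) (2 * B)).coeff m = (P (2 * A) (2 * B)).coeff (m + 2) := by
    have h := palin A B (m + 2) (by omega)
    rw [show 2 * A + 2 * B - (m + 2) = m from by omega] at h
    exact h
  have ho := ode A B m
  rw [hp] at ho
  have key : (2 : ℤ) * (((A : ℤ) + B + 1) * (P (2 * A) (2 * B)).coeff (m + 2))
      = 2 * (((A : ℤ) - B) * (P (2 * A) (2 * B)).coeff (m + 1)) := by
    linear_combination ho
  exact mul_left_cancel₀ two_ne_zero key

lemma step2 (A B m : ℕ) (hm : A + B = m + 1) :
    ((A : ℤ) + B + 1) * (P (2 * A) (2 * B + 2)).coeff (m + 2)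
      = -(4 * (B : ℤ) + 2) * (P (2 * A) (2 * B)).coeff (m + 1) := by
  have hmul : P (2 * A) (2 * B + 2)
      = P (2 * A) (2 * B) - X * P (2 * A) (2 * B) - X * P (2 * A) (2 * B)
        + X ^ 2 * P (2 * A) (2 * B) := by
    unfold P; ring
  have hc : (P (2 * A) (2 * B + 2)).coeff (m + 2)
      = (P (2 * A) (2 * B)).coeff (m + 2) - (P (2 * A) (2 * B)).coeff (m + 1)
        - (P (2 * A) (2 * B)).coeff (m + 1) + (P (2 * A) (2 * B)).coeff m := by
    rw [hmul, coeff_add, coeff_sub, coeff_sub,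
      show m + 2 = m + 1 + 1 from rfl, coeff_X_mul, coeff_X_pow_mul]
  have hp : (P (2 * A) (2 * B)).coeff m = (P (2 * A) (2 * B)).coeff (m + 2) := by
    have h := palin A B (m + 2) (by omega)
    rw [show 2 * A + 2 * B - (m + 2) = m from by omega] at h
    exact h
  have h1 := step1 A B m hm
  rw [hc, hp]
  linear_combination 2 * h1

lemma key4 (A B : ℕ) :
    (((A + B).choose A : ℤ)) * (P (2 * A) (2 * B)).coeff (A + B)
      = (-1) ^ B * ((2 * A).choose A : ℤ) * ((2 * B).choose B : ℤ) := by
  rcases A with _ | A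
  · unfold P
    simp [coeff_one_sub_X_pow]
    try ring
  · induction B with
    | zero =>
        unfold P
        simp [coeff_one_add_X_pow]
    | succ B ih =>
        have hs := step2 (A + 1) B (A + B) (by omega)
        have f1 : (A + B + 2) * ((A + B + 1).choose (A + 1))
            = ((A + B + 2).choose (A + 1)) * (B + 1) := by
          have h0 := Nat.add_one_mul_choose_eq (A + B + 1) B
          have e1 : (A + B + 1).choose B = (A + B + 1).choose (A + 1) := by
            rw [← Nat.choose_symm (show B ≤ A + B + 1 by omega),
              show A + B + 1 - B = A + 1 from by omega]
          have e2 : (A + B + 2).choose (B + 1) = (A + B + 2).choose (A + 1) := by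
            rw [← Nat.choose_symm (show B + 1 ≤ A + B + 2 by omega),
              show A + B + 2 - (B + 1) = A + 1 from by omega]
          rw [← e1, ← e2]
          simpa [Nat.succ_eq_add_one] using h0
        have f2 : (B + 1) * ((2 * B + 2).choose (B + 1))
            = 2 * (2 * B + 1) * ((2 * B).choose B) := by
          have h0 := Nat.succ_mul_centralBinom_succ B
          simpa [Nat.centralBinom, Nat.mul_add, Nat.succ_eq_add_one] using h0
        have f1' : ((A : ℤ) + B + 2) * ((A + B + 1).choose (A + 1) : ℤ)
            = ((A + B + 2).choose (A + 1) : ℤ) * ((B : ℤ) + 1) := by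
          exact_mod_cast congrArg (Nat.cast : ℕ → ℤ) f1
        have f2' : ((B : ℤ) + 1) * ((2 * B + 2).choose (B + 1) : ℤ)
            = 2 * (2 * (B : ℤ) + 1) * ((2 * B).choose B : ℤ) := by
          exact_mod_cast congrArg (Nat.cast : ℕ → ℤ) f2
        rw [show (A + 1) + (B + 1) = A + B + 2 from by omega,
          show 2 * (B + 1) = 2 * B + 2 from by omega] at *
        rw [show (A + 1) + B = A + B + 1 from by omega] at ih
        apply mul_left_cancel₀ (show ((B : ℤ) + 1) * ((A : ℤ) + B + 2) ≠ 0 from by positivity)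
        have hs' : ((A : ℤ) + B + 2) * (P (2 * (A + 1)) (2 * B + 2)).coeff (A + B + 2)
            = -(4 * (B : ℤ) + 2) * (P (2 * (A + 1)) (2 * B)).coeff (A + B + 1) := by
          convert hs using 2 <;> push_cast <;> ring
        linear_combination (((B : ℤ) + 1) * ((A + B + 2).choose (A + 1) : ℤ)) * hs'
          + ((4 * (B : ℤ) + 2) * (P (2 * (A + 1)) (2 * B)).coeff (A + B + 1)) * f1'
          - ((4 * (B : ℤ) + 2) * ((A : ℤ) + B + 2)) * ih
          + (((A : ℤ) + B + 2) * (-1 : ℤ) ^ B * ((2 * (A + 1)).choose (A + 1) : ℤ)) * f2'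

end KrawAux

theorem stmt_18 (N x : ℕ) (hx : x ≤ N) :
    ∑ m ∈ Finset.range (N + 1), ((krawtchouk N m x : ℝ)) ^ 2 =
      (((2 * N - 2 * x).choose (N - x) : ℝ) * ((2 * x).choose x : ℝ)) / (N.choose x : ℝ) := by
  open KrawAux in
  set A := N - x with hA
  have hAB : A + x = N := by omega
  have hZ : (N.choose x : ℤ) * (∑ m ∈ Finset.range (N + 1), (krawtchouk N m x) ^ 2)
      = ((2 * N - 2 * x).choose (N - x) : ℤ) * ((2 * x).choose x : ℤ) := by
    have hsum : ∑ m ∈ Finset.range (N + 1), (krawtchouk N m x) ^ 2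
        = (P A x * reflect N (P A x)).coeff N := by
      rw [sum_sq]
      exact Finset.sum_congr rfl fun m _ => by rw [krawtchouk_eq]; ring
    have hre : P A x * reflect N (P A x) = C ((-1 : ℤ) ^ x) * P (2 * A) (2 * x) := by
      rw [← hAB, reflect_P, map_pow, map_neg, map_one, ← P_sq]
      ring
    rw [hsum, hre, coeff_C_mul]
    have hkey := key4 A x
    rw [hAB, Nat.choose_symm hx] at hkey
    have hsq : (-1 : ℤ) ^ x * (-1 : ℤ) ^ x = 1 := by
      rw [← pow_add]
      exact Even.neg_one_pow ⟨x, rfl⟩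
    rw [show 2 * N - 2 * x = 2 * A from by omega, hA]
    linear_combination ((-1 : ℤ) ^ x) * hkey
      + (((2 * A).choose A : ℤ) * ((2 * x).choose x : ℤ)) * hsq
  have hne : (N.choose x : ℝ) ≠ 0 := Nat.cast_ne_zero.mpr (Nat.choose_pos hx).ne'
  rw [eq_div_iff hne]
  have hR := congrArg (Int.cast : ℤ → ℝ) hZ
  push_cast at hR
  linear_combination hR
end
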